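/- arXiv:math/0208017 — 5 statements merged into one kernel-verified Lean document; each statement's English description precedes it below -/
import Mathlib

section
/- The map sending an n-dimensional subspace P of R^m to its de-traced projection matrix 𝒫̄ = 𝒫 − (n/m)I_m is an isometric embedding of the Grassmannian G(m,n) with chordal distance into a sphere of radius sqrt(n(m−n)/m) centered at the origin in the space of traceless symmetric m×m matrices (of dimension (m+1)m/2 − 1), with d_c(P,Q) = (1/√2)·‖𝒫̄ − 𝒬̄‖. -/
/-!
Write `P̄ = P - (n/m) I`. Because the shift is scalar it cancels in `P̄ - Q̄ = P - Q`, and for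
symmetric idempotents `‖P - Q‖² = tr P + tr Q - 2 tr (PQ) = 2 (n - tr (PQ))`; the same
expansion gives `‖P̄‖² = n - n²/m`. For the dimension count, a symmetric matrix is the same as
a function on unordered pairs `Sym2 (Fin m)`, of which there are `m(m+1)/2`, and the traceless
ones form the kernel of the trace, a functional that does not vanish on `I`.
-/

open Matrix

/-- The subspace of traceless symmetric real `m × m` matrices. -/
def tracelessSym (m : ℕ) : Submodule ℝ (Matrix (Fin m) (Fin m) ℝ) where
  carrier := {M | Mᵀ = M ∧ Matrix.trace M = 0}
  add_mem' := by
    rintro a b ⟨ha1, ha2⟩ ⟨hb1, hb2⟩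
    exact ⟨by simp [Matrix.transpose_add, ha1, hb1], by simp [ha2, hb2]⟩
  zero_mem' := by simp
  smul_mem' := by
    rintro c a ⟨ha1, ha2⟩
    exact ⟨by simp [Matrix.transpose_smul, ha1], by simp [ha2]⟩

open Module

theorem Submodule.finrank_inf_ker_add_one {K V : Type*} [Field K] [AddCommGroup V] [Module K V]
    [FiniteDimensional K V] {S : Submodule K V} {f : Dual K V} {x : V} (hx : x ∈ S)
    (hfx : f x ≠ 0) : finrank K ↥(S ⊓ LinearMap.ker f) + 1 = finrank K S := by
  have hf : f ∘ₗ S.subtype ≠ 0 := fun h => hfx (by simpa using LinearMap.congr_fun h ⟨x, hx⟩)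
  rw [← Dual.finrank_ker_add_one_of_ne_zero hf, LinearMap.ker_comp, ← Submodule.map_comap_subtype,
    Submodule.finrank_map_subtype_eq]

namespace Matrix

variable {ι K : Type*}

section Symmetric

variable (ι K) [CommRing K]

def symmetricMatrices : Submodule K (Matrix ι ι K) where
  carrier := {A | A.IsSymm}
  add_mem' := IsSymm.add
  zero_mem' := isSymm_zero
  smul_mem' c _ h := h.smul c

def symmetricMatricesEquivSym2 : symmetricMatrices ι K ≃ₗ[K] (Sym2 ι → K) where
  toFun A := Sym2.lift ⟨A.1, fun i j => (A.2.apply i j).symm⟩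
  map_add' _ _ := funext fun z => Sym2.ind (fun _ _ => rfl) z
  map_smul' _ _ := funext fun z => Sym2.ind (fun _ _ => rfl) z
  invFun f := ⟨of fun i j => f s(i, j), IsSymm.ext fun i j => by simp [Sym2.eq_swap]⟩
  left_inv _ := rfl
  right_inv f := funext fun z => Sym2.ind (fun _ _ => rfl) z

end Symmetric

theorem finrank_symmetricMatrices [Fintype ι] [Field K] :
    finrank K (symmetricMatrices ι K) = Fintype.card ι * (Fintype.card ι + 1) / 2 := by
  rw [(symmetricMatricesEquivSym2 ι K).finrank_eq, finrank_fintype_fun_eq_card, Sym2.card,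
    Nat.choose_two_right, Nat.add_sub_cancel, mul_comm]

section Projection

variable [Fintype ι] {P Q : Matrix ι ι K}

theorem trace_transpose_mul_self_sub_of_isIdempotentElem [CommRing K] (hP : P.IsSymm)
    (hQ : Q.IsSymm) (hP' : IsIdempotentElem P) (hQ' : IsIdempotentElem Q) :
    trace ((P - Q)ᵀ * (P - Q)) = trace P + trace Q - 2 * trace (P * Q) := by
  rw [transpose_sub, hP.eq, hQ.eq, sub_mul, mul_sub, mul_sub, hP'.eq, hQ'.eq, trace_sub, trace_sub,
    trace_sub, trace_mul_comm Q P]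
  ring

theorem trace_transpose_mul_self_sub_smul_one [CommRing K] [DecidableEq ι] (hP : P.IsSymm)
    (hP' : IsIdempotentElem P) (c : K) :
    trace ((P - c • 1)ᵀ * (P - c • 1)) = trace P - 2 * c * trace P + c ^ 2 * Fintype.card ι := by
  rw [transpose_sub, hP.eq, transpose_smul, transpose_one, sub_mul, mul_sub, mul_sub, hP'.eq]
  simp only [smul_mul, Matrix.mul_smul, one_mul, mul_one, smul_smul, trace_sub, trace_smul,
    trace_one, smul_eq_mul]
  ring

variable [Field K] [CharZero K]

theorem trace_div_card_mul_card (A : Matrix ι ι K) :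
    trace A / Fintype.card ι * Fintype.card ι = trace A := by
  rcases isEmpty_or_nonempty ι with hι | hι
  · simp [trace_eq_zero_of_isEmpty]
  · exact div_mul_cancel₀ _ (by simp)

variable [DecidableEq ι]

theorem trace_sub_trace_div_card_smul_one (A : Matrix ι ι K) :
    trace (A - (trace A / Fintype.card ι) • 1) = 0 := by
  rw [trace_sub, trace_smul, trace_one, smul_eq_mul, trace_div_card_mul_card, sub_self]

theorem trace_transpose_mul_self_sub_trace_div_card_smul_one (hP : P.IsSymm)
    (hP' : IsIdempotentElem P) :
    trace ((P - (trace P / Fintype.card ι) • 1)ᵀ * (P - (trace P / Fintype.card ι) • 1)) =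
      trace P * (Fintype.card ι - trace P) / Fintype.card ι := by
  rw [trace_transpose_mul_self_sub_smul_one hP hP', sq, mul_assoc _ _ (Fintype.card ι : K),
    trace_div_card_mul_card, mul_sub, sub_div, ← div_mul_eq_mul_div, trace_div_card_mul_card]
  ring

end Projection

end Matrix

theorem finrank_tracelessSym (m : ℕ) :
    finrank ℝ (tracelessSym m) = m * (m + 1) / 2 - 1 := by
  rcases m.eq_zero_or_pos with rfl | hm
  · simp [Submodule.eq_bot_of_subsingleton]
  have hsplit : tracelessSym m =
      symmetricMatrices (Fin m) ℝ ⊓ LinearMap.ker (traceLinearMap (Fin m) ℝ ℝ) := rfl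
  have := Submodule.finrank_inf_ker_add_one (S := symmetricMatrices (Fin m) ℝ)
    (f := traceLinearMap (Fin m) ℝ ℝ) isSymm_one (by simpa using hm.ne')
  rw [← hsplit, finrank_symmetricMatrices, Fintype.card_fin] at this
  omega

theorem grassmannian_embedding_general {m n : ℕ}
    (P Q : Matrix (Fin m) (Fin m) ℝ)
    (hPsym : Pᵀ = P) (hPidem : P * P = P) (hPtr : Matrix.trace P = (n : ℝ))
    (hQsym : Qᵀ = Q) (hQidem : Q * Q = Q) (hQtr : Matrix.trace Q = (n : ℝ)) :
    (P - ((n : ℝ) / m) • 1) ∈ tracelessSym m ∧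
    Module.finrank ℝ (tracelessSym m) = m * (m + 1) / 2 - 1 ∧
    Matrix.trace ((P - ((n : ℝ) / m) • 1)ᵀ * (P - ((n : ℝ) / m) • 1)) =
      (n : ℝ) * ((m : ℝ) - n) / m ∧
    (n : ℝ) - Matrix.trace (P * Q) =
      (1 / 2) * Matrix.trace
        (((P - ((n : ℝ) / m) • 1) - (Q - ((n : ℝ) / m) • 1))ᵀ *
          ((P - ((n : ℝ) / m) • 1) - (Q - ((n : ℝ) / m) • 1))) := by
  have hshift : (n : ℝ) / m = trace P / Fintype.card (Fin m) := by rw [hPtr, Fintype.card_fin]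
  refine ⟨⟨(IsSymm.sub hPsym (isSymm_one.smul _)).eq, ?_⟩, finrank_tracelessSym m, ?_, ?_⟩
  · rw [hshift, trace_sub_trace_div_card_smul_one]
  · rw [hshift, trace_transpose_mul_self_sub_trace_div_card_smul_one hPsym hPidem, hPtr,
      Fintype.card_fin]
  · rw [sub_sub_sub_cancel_right, trace_transpose_mul_self_sub_of_isIdempotentElem hPsym hQsym
      hPidem hQidem, hPtr, hQtr]
    ring

/-- The representation of `n`-spaces in `ℝ^m` by their de-traced projection
matrices `𝒫̄ = 𝒫 - (n/m) I` embeds the Grassmannian `G(m,n)` isometrically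
(for chordal distance, `d_c = ‖𝒫̄ - 𝒬̄‖/√2`) into the sphere of radius
`√(n(m-n)/m)` around the origin of the space of traceless symmetric matrices,
which has dimension `m(m+1)/2 - 1`. -/
theorem grassmannian_embedding {m n : ℕ} (hm : 0 < m) (hn : 1 ≤ n) (hnm : n ≤ m)
    (P Q : Matrix (Fin m) (Fin m) ℝ)
    (hPsym : Pᵀ = P) (hPidem : P * P = P) (hPtr : Matrix.trace P = (n : ℝ))
    (hQsym : Qᵀ = Q) (hQidem : Q * Q = Q) (hQtr : Matrix.trace Q = (n : ℝ)) :
    (P - ((n : ℝ) / m) • 1) ∈ tracelessSym m ∧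
    Module.finrank ℝ (tracelessSym m) = m * (m + 1) / 2 - 1 ∧
    Matrix.trace ((P - ((n : ℝ) / m) • 1)ᵀ * (P - ((n : ℝ) / m) • 1)) =
      (n : ℝ) * ((m : ℝ) - n) / m ∧
    (n : ℝ) - Matrix.trace (P * Q) =
      (1 / 2) * Matrix.trace
        (((P - ((n : ℝ) / m) • 1) - (Q - ((n : ℝ) / m) • 1))ᵀ *
          ((P - ((n : ℝ) / m) • 1) - (Q - ((n : ℝ) / m) • 1))) :=
  grassmannian_embedding_general P Q hPsym hPidem hPtr hQsym hQidem hQtr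
end

section
/- (Simplex bound) For any packing of N distinct n-dimensional subspaces P₁,…,P_N of R^m, the minimum squared chordal distance satisfies min_{i≠j} d_c²(P_i,P_j) ≤ (n(m−n)/m)·(N/(N−1)). -/
/-!
For `N` points on a sphere of radius `r` in a real inner product space, the sum of all squared
pairwise distances is `2 N² r² - 2 ‖∑ xᵢ‖² ≤ 2 N² r²`, so one of the `N (N - 1)` ordered pairs of
distinct points is at squared distance at most `2 r² N / (N - 1)` (Rankin's simplex bound).
Vectorising matrices turns the Frobenius inner product into the Euclidean one; the traceless
parts `Pₖ - (n/m) I` of the projections then lie on the sphere with `r² = n (m - n) / m`, and the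
squared distance between two of them is `2 (n - tr (Pᵢ Pⱼ))`.
-/

open Matrix

theorem Finset.exists_ne_le_of_sum_sum_le {ι : Type*} [Fintype ι] (f : ι → ι → ℝ)
    (hf : ∀ i, f i i = 0) (hι : 2 ≤ Fintype.card ι) {b : ℝ}
    (h : ∑ i, ∑ j, f i j ≤ Fintype.card ι * (Fintype.card ι - 1) * b) :
    ∃ i j, i ≠ j ∧ f i j ≤ b := by
  classical
  have hcard : ∀ i : ι, ((univ.erase i).card : ℝ) = Fintype.card ι - 1 := fun i => by
    rw [card_erase_of_mem (mem_univ i), card_univ, Nat.cast_pred (by omega : 0 < Fintype.card ι)]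
  have hsum : ∑ i, ∑ j ∈ univ.erase i, f i j ≤ ∑ i : ι, ∑ _j ∈ univ.erase i, b := by
    have hf' : ∀ i, ∑ j ∈ univ.erase i, f i j = ∑ j, f i j := fun i => sum_erase univ (hf i)
    simp only [hf', sum_const, hcard, card_univ, nsmul_eq_mul, ← mul_assoc]
    exact h
  have : Nonempty ι := Fintype.card_pos_iff.1 (by omega)
  obtain ⟨i, -, hi⟩ := exists_le_of_sum_le univ_nonempty hsum
  have hne : (univ.erase i).Nonempty := by
    rw [← card_pos, card_erase_of_mem (mem_univ i), card_univ]; omega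
  obtain ⟨j, hj, hij⟩ := exists_le_of_sum_le hne hi
  exact ⟨i, j, (ne_of_mem_erase hj).symm, hij⟩

section Rankin

variable {ι E : Type*} [Fintype ι] [NormedAddCommGroup E] [InnerProductSpace ℝ E]

theorem sum_sum_norm_sub_sq (x : ι → E) :
    ∑ i, ∑ j, ‖x i - x j‖ ^ 2 =
      2 * Fintype.card ι * ∑ i, ‖x i‖ ^ 2 - 2 * ‖∑ i, x i‖ ^ 2 := by
  simp only [norm_sub_sq_real, Finset.sum_add_distrib, Finset.sum_sub_distrib, Finset.sum_const,
    ← Finset.mul_sum, ← inner_sum, ← sum_inner, real_inner_self_eq_norm_sq, Finset.card_univ,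
    nsmul_eq_mul]
  ring

theorem exists_norm_sub_sq_le_of_norm_sq_eq (x : ι → E) (hι : 2 ≤ Fintype.card ι) {s : ℝ}
    (hx : ∀ i, ‖x i‖ ^ 2 = s) :
    ∃ i j, i ≠ j ∧ ‖x i - x j‖ ^ 2 ≤ 2 * s * (Fintype.card ι / (Fintype.card ι - 1)) := by
  have hι' : (Fintype.card ι : ℝ) - 1 ≠ 0 := by
    have : (2 : ℝ) ≤ Fintype.card ι := by exact_mod_cast hι
    linarith
  refine Finset.exists_ne_le_of_sum_sum_le (fun i j => ‖x i - x j‖ ^ 2) (by simp) hι ?_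
  calc ∑ i, ∑ j, ‖x i - x j‖ ^ 2
      = 2 * Fintype.card ι * ∑ i, ‖x i‖ ^ 2 - 2 * ‖∑ i, x i‖ ^ 2 := sum_sum_norm_sub_sq x
    _ ≤ 2 * Fintype.card ι * ∑ i, ‖x i‖ ^ 2 := sub_le_self _ (by positivity)
    _ = Fintype.card ι * (Fintype.card ι - 1) *
          (2 * s * (Fintype.card ι / (Fintype.card ι - 1))) := by
      simp only [hx, Finset.sum_const, Finset.card_univ, nsmul_eq_mul]
      field_simp

end Rankin

namespace Matrix

variable {m n : Type*} [Fintype m] [Fintype n]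

theorem norm_toLp_vec_sq (A : Matrix m n ℝ) :
    ‖WithLp.toLp 2 (vec A)‖ ^ 2 = (Aᵀ * A).trace := by
  rw [← real_inner_self_eq_norm_sq, EuclideanSpace.inner_toLp_toLp, star_trivial,
    vec_dotProduct_vec]

theorem trace_transpose_sub_mul_sub {P Q : Matrix m m ℝ} (hP : Pᵀ = P) (hQ : Qᵀ = Q) :
    ((P - Q)ᵀ * (P - Q)).trace = (P * P).trace + (Q * Q).trace - 2 * (P * Q).trace := by
  rw [transpose_sub, hP, hQ, sub_mul, mul_sub, mul_sub, trace_sub, trace_sub, trace_sub,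
    trace_mul_comm Q P]
  ring

theorem trace_transpose_sub_smul_one_mul [DecidableEq m] {P : Matrix m m ℝ} (hP : Pᵀ = P)
    (c : ℝ) :
    ((P - c • 1)ᵀ * (P - c • 1)).trace =
      (P * P).trace - 2 * c * P.trace + c ^ 2 * Fintype.card m := by
  rw [transpose_sub, hP, transpose_smul, transpose_one]
  simp only [sub_mul, mul_sub, Matrix.smul_mul, Matrix.mul_smul, Matrix.one_mul, Matrix.mul_one,
    smul_smul, trace_sub, trace_smul, trace_one, smul_eq_mul]
  ring

end Matrix

theorem simplex_bound_general {m n N : ℕ} (hN : 2 ≤ N)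
    (P : Fin N → Matrix (Fin m) (Fin m) ℝ)
    (hsym : ∀ k, (P k)ᵀ = P k) (hidem : ∀ k, P k * P k = P k)
    (htr : ∀ k, Matrix.trace (P k) = (n : ℝ)) :
    ∃ i j, i ≠ j ∧
      (n : ℝ) - Matrix.trace (P i * P j) ≤
        ((n : ℝ) * ((m : ℝ) - n) / m) * ((N : ℝ) / ((N : ℝ) - 1)) := by
  -- For `m = 0` the right-hand side is the junk value `_ / 0 = 0`, but then `n = 0` too.
  obtain rfl | hm := Nat.eq_zero_or_pos m
  · have hn : (n : ℝ) = 0 := by simpa using (htr ⟨0, by omega⟩).symm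
    exact ⟨⟨0, by omega⟩, ⟨1, by omega⟩, by simp, by simp [hn]⟩
  let X k := WithLp.toLp 2 (vec (P k - ((n : ℝ) / m) • 1))
  have hX : ∀ k, ‖X k‖ ^ 2 = n * (m - n) / m := fun k => by
    rw [norm_toLp_vec_sq, trace_transpose_sub_smul_one_mul (hsym k), hidem, htr, Fintype.card_fin]
    field_simp
    ring
  obtain ⟨i, j, hij, hle⟩ := exists_norm_sub_sq_le_of_norm_sq_eq X (by simpa using hN) hX
  have hdist : ‖X i - X j‖ ^ 2 = 2 * (n - (P i * P j).trace) := by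
    rw [← WithLp.toLp_sub, ← vec_sub, sub_sub_sub_cancel_right, norm_toLp_vec_sq,
      trace_transpose_sub_mul_sub (hsym i) (hsym j), hidem, hidem, htr, htr]
    ring
  refine ⟨i, j, hij, ?_⟩
  rw [Fintype.card_fin] at hle
  linarith

/-- Simplex bound: for any packing of `N` distinct `n`-dimensional subspaces of
`ℝ^m` (given by their orthogonal projection matrices), some pair has squared
chordal distance at most `(n(m-n)/m) · N/(N-1)`. -/
theorem simplex_bound {m n N : ℕ} (hN : 2 ≤ N)
    (P : Fin N → Matrix (Fin m) (Fin m) ℝ)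
    (hsym : ∀ k, (P k)ᵀ = P k) (hidem : ∀ k, P k * P k = P k)
    (htr : ∀ k, Matrix.trace (P k) = (n : ℝ)) (hinj : Function.Injective P) :
    ∃ i j, i ≠ j ∧
      (n : ℝ) - Matrix.trace (P i * P j) ≤
        ((n : ℝ) * ((m : ℝ) - n) / m) * ((N : ℝ) / ((N : ℝ) - 1)) :=
  simplex_bound_general hN P hsym hidem htr
end

section
/- (Rankin orthoplex bound for spheres) If x₁,…,x_N are N points on a sphere of radius r in R^D with N > D + 1, then min_{i≠j} ‖x_i − x_j‖² ≤ 2r². -/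
/-!
If all pairwise distances exceeded `√2 r`, the points would be pairwise at obtuse angles.
More than `D + 1` points of `ℝ^D` are affinely dependent, so Radon's theorem splits them into
two groups whose convex hulls share a point `p`. Every vector of one group makes an obtuse angle
with every vector of the other, and by convexity of half-spaces so do the two hulls; hence
`⟪p, p⟫ < 0`, which is absurd.
-/

open Module

variable {E : Type*} [NormedAddCommGroup E] [InnerProductSpace ℝ E]

lemma inner_lt_zero_of_mem_convexHull {s t : Set E}
    (hst : ∀ a ∈ s, ∀ b ∈ t, inner ℝ a b < 0) {p q : E}
    (hp : p ∈ convexHull ℝ s) (hq : q ∈ convexHull ℝ t) : inner ℝ p q < 0 := by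
  have hpt : ∀ b ∈ t, inner ℝ p b < 0 := fun b hb =>
    convexHull_min (t := {x | inner ℝ x b < 0}) (fun a ha => hst a ha b hb)
      (convex_halfSpace_lt ⟨fun x y => inner_add_left x y b,
        fun c x => real_inner_smul_left x b c⟩ (0 : ℝ)) hp
  exact convexHull_min (t := {y | inner ℝ p y < 0}) hpt
    (convex_halfSpace_lt ⟨inner_add_right p, fun c x => real_inner_smul_right p x c⟩ (0 : ℝ)) hq

theorem Fintype.card_le_finrank_add_one_of_pairwise_inner_lt_zero [FiniteDimensional ℝ E]
    {ι : Type*} [Fintype ι] {v : ι → E} (hv : Pairwise fun i j => inner ℝ (v i) (v j) < 0) :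
    Fintype.card ι ≤ finrank ℝ E + 1 := by
  by_contra hcard
  have hdep : ¬AffineIndependent ℝ v := fun hind =>
    hcard (hind.card_le_finrank_succ.trans (Nat.add_le_add_right (Submodule.finrank_le _) 1))
  obtain ⟨I, p, hpI, hpIc⟩ := Convex.radon_partition hdep
  have hsep : ∀ a ∈ v '' I, ∀ b ∈ v '' Iᶜ, inner ℝ a b < 0 := by
    rintro _ ⟨i, hi, rfl⟩ _ ⟨j, hj, rfl⟩
    exact hv fun hij => hj (hij ▸ hi)
  exact (real_inner_self_nonneg (x := p)).not_gt (inner_lt_zero_of_mem_convexHull hsep hpI hpIc)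

/-- Rankin orthoplex bound: among `N > D + 1` points on a sphere of radius `r`
in `ℝ^D`, some pair has squared distance at most `2r²`. -/
theorem rankin_orthoplex_bound {D N : ℕ} (hN : D + 1 < N) (r : ℝ)
    (x : Fin N → EuclideanSpace ℝ (Fin D)) (hx : ∀ k, ‖x k‖ = r) :
    ∃ i j, i ≠ j ∧ ‖x i - x j‖ ^ 2 ≤ 2 * r ^ 2 := by
  by_contra! hfar
  have hobtuse : Pairwise fun i j => inner ℝ (x i) (x j) < 0 := fun i j hij => by
    have := hfar i j hij
    rw [norm_sub_sq_real, hx i, hx j] at this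
    linarith
  have := Fintype.card_le_finrank_add_one_of_pairwise_inner_lt_zero hobtuse
  rw [Fintype.card_fin, finrank_euclideanSpace_fin] at this
  omega
end

section
/- Any packing of N n-dimensional subspaces of R^m achieving equality in the simplex bound min d_c² = (n(m−n)/m)·N/(N−1) must satisfy N ≤ m(m+1)/2. -/
/-!
Write `x k = P k - (n / m) • 1` for the traceless parts, so that in the Frobenius inner product
`‖x k‖² = s := n (m - n) / m` and the hypothesis reads `⟪x i, x j⟫ ≤ -s / (N - 1)` for `i ≠ j`.
As `0 ≤ ‖∑ x k‖² = N s + ∑_{i ≠ j} ⟪x i, x j⟫ ≤ 0`, every one of these inequalities is an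
equality. Hence the Gram matrix of the `P k` is `(n - γ) J + γ I` with `γ = s N / (N - 1) > 0`;
together with `⟪1, P k⟫ = n ≠ 0` this makes the `P k` linearly independent, and they lie in the
space of symmetric matrices, of dimension `m (m + 1) / 2`.
-/

open Matrix
open Finset
open scoped RealInnerProductSpace

section InnerProductSpace

variable {E : Type*} [NormedAddCommGroup E] [InnerProductSpace ℝ E] {ι : Type*} [Fintype ι]

theorem inner_eq_neg_div_of_inner_le_neg_div {x : ι → E} {s : ℝ}
    (hself : ∀ i, ⟪x i, x i⟫ = s)
    (hle : ∀ i j, i ≠ j → ⟪x i, x j⟫ ≤ -s / (Fintype.card ι - 1)) {i j : ι} (hij : i ≠ j) :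
    ⟪x i, x j⟫ = -s / (Fintype.card ι - 1) := by
  classical
  set c := -s / (Fintype.card ι - 1)
  have hN : (Fintype.card ι : ℝ) - 1 ≠ 0 := by
    rw [sub_ne_zero]; exact_mod_cast (Fintype.one_lt_card_iff.mpr ⟨i, j, hij⟩).ne'
  -- `g` is the Gram matrix of a regular simplex centred at the origin
  let g : ι → ι → ℝ := fun k l => c + if k = l then s - c else 0
  have hg : ∀ k l, ⟪x k, x l⟫ ≤ g k l := fun k l => by
    by_cases h : k = l
    · subst h; simp [g, ← hself k]
    · simpa [g, h] using hle k l h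
  have hsum_g : ∑ k, ∑ l, g k l = 0 := by
    simp only [g, sum_add_distrib, sum_ite_eq, mem_univ, if_true, sum_const, card_univ,
      nsmul_eq_mul, c]
    field_simp; ring
  have hsum : 0 ≤ ∑ k, ∑ l, ⟪x k, x l⟫ := by
    have := real_inner_self_nonneg (x := ∑ k, x k)
    rw [sum_inner] at this; simpa only [inner_sum] using this
  have hzero : ∑ p : ι × ι, (⟪x p.1, x p.2⟫ - g p.1 p.2) = 0 := by
    refine le_antisymm (sum_nonpos fun p _ => sub_nonpos.mpr (hg p.1 p.2)) ?_
    rw [Fintype.sum_prod_type]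
    simp only [sum_sub_distrib, hsum_g]
    linarith
  have := (sum_eq_zero_iff_of_nonpos fun p _ => sub_nonpos.mpr (hg p.1 p.2)).mp hzero
    (i, j) (mem_univ _)
  simpa [g, hij, sub_eq_zero] using this

theorem linearIndependent_of_inner_eq_add_ite [DecidableEq ι] {x : ι → E} {a γ : ℝ} (hγ : γ ≠ 0)
    (u : E) (hu : ∀ i, ⟪u, x i⟫ = 1) (hx : ∀ i j, ⟪x i, x j⟫ = a + if i = j then γ else 0) :
    LinearIndependent ℝ x := by
  rw [Fintype.linearIndependent_iff]
  intro c hc j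
  have hsum : ∑ i, c i = 0 := by
    simpa [inner_sum, inner_smul_right, hu] using congrArg (⟪u, ·⟫) hc
  have hj : a * ∑ i, c i + γ * c j = 0 := by
    have := congrArg (⟪·, x j⟫) hc
    simp only [sum_inner, inner_smul_left, hx, inner_zero_left] at this
    simpa [mul_add, sum_add_distrib, mul_sum, mul_comm] using this
  rw [hsum, mul_zero, zero_add] at hj
  exact (mul_eq_zero.mp hj).resolve_left hγ

end InnerProductSpace

namespace Matrix

variable {d : Type*}

noncomputable def frobeniusEmbedding : Matrix d d ℝ →ₗ[ℝ] EuclideanSpace ℝ (d × d) where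
  toFun A := WithLp.toLp 2 fun p => A p.1 p.2
  map_add' _ _ := rfl
  map_smul' _ _ := rfl

@[simp]
theorem ofLp_frobeniusEmbedding (A : Matrix d d ℝ) (p : d × d) :
    (frobeniusEmbedding A).ofLp p = A p.1 p.2 := rfl

theorem frobeniusEmbedding_injective :
    Function.Injective (frobeniusEmbedding : Matrix d d ℝ → EuclideanSpace ℝ (d × d)) :=
  fun A B h => by ext i j; simpa using congrArg (·.ofLp (i, j)) h

theorem inner_frobeniusEmbedding [Fintype d] (A B : Matrix d d ℝ) :
    ⟪frobeniusEmbedding A, frobeniusEmbedding B⟫ = trace (Aᵀ * B) := by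
  simp only [PiLp.inner_apply, ofLp_frobeniusEmbedding, RCLike.inner_apply, conj_trivial,
    Fintype.sum_prod_type, trace, diag_apply, mul_apply, transpose_apply]
  rw [sum_comm]; simp_rw [mul_comm]

-- `z.out` orders the unordered pair `z` arbitrarily; on symmetric matrices the order is immaterial.
noncomputable def sym2Coords {K : Type*} [Field K] : Matrix d d K →ₗ[K] (Sym2 d → K) where
  toFun A z := A z.out.1 z.out.2
  map_add' _ _ := rfl
  map_smul' _ _ := rfl

theorem IsSymm.eq_zero_of_sym2Coords_eq_zero {K : Type*} [Field K] {A : Matrix d d K}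
    (hA : A.IsSymm) (h : sym2Coords A = 0) : A = 0 := by
  ext a b
  have hab : A (s(a, b)).out.1 (s(a, b)).out.2 = 0 := congrFun h s(a, b)
  have hout : s((s(a, b)).out.1, (s(a, b)).out.2) = s(a, b) := Quot.out_eq _
  rcases Sym2.eq_iff.mp hout with ⟨h₁, h₂⟩ | ⟨h₁, h₂⟩
  · rwa [h₁, h₂] at hab
  · rwa [h₁, h₂, hA.apply] at hab

theorem card_le_card_sym2_of_linearIndependent [Fintype d] {ι K : Type*} [Fintype ι] [Field K]
    {A : ι → Matrix d d K} (hA : ∀ i, (A i).IsSymm) (hli : LinearIndependent K A) :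
    Fintype.card ι ≤ Fintype.card (Sym2 d) := by
  have hspan : ∀ B ∈ Submodule.span K (Set.range A), B.IsSymm := fun B hB => by
    induction hB using Submodule.span_induction with
    | mem _ h => obtain ⟨i, rfl⟩ := h; exact hA i
    | zero => exact isSymm_zero
    | add _ _ _ _ h₁ h₂ => exact h₁.add h₂
    | smul r _ _ h => exact h.smul r
  have : LinearIndependent K (sym2Coords ∘ A) := hli.map <|
    Submodule.disjoint_def.mpr fun B hB hker => (hspan B hB).eq_zero_of_sym2Coords_eq_zero hker
  simpa using this.fintype_card_le_finrank

end Matrix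

section Projections

variable {m : ℕ}

theorem inner_frobeniusEmbedding_sub_smul_one {A B : Matrix (Fin m) (Fin m) ℝ} {r : ℝ}
    (hm : m ≠ 0) (hA : Aᵀ = A) (htrA : trace A = r) (htrB : trace B = r) :
    ⟪frobeniusEmbedding (A - (r / m) • 1), frobeniusEmbedding (B - (r / m) • 1)⟫ =
      trace (A * B) - r ^ 2 / m := by
  rw [inner_frobeniusEmbedding, transpose_sub, transpose_smul, transpose_one, hA]
  simp only [sub_mul, mul_sub, Matrix.smul_mul, Matrix.mul_smul, one_mul, mul_one, smul_smul,
    trace_sub, trace_smul, trace_one, htrA, htrB, Fintype.card_fin, smul_eq_mul]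
  field_simp
  ring

theorem inner_frobeniusEmbedding_sub_smul_one_self {P : Matrix (Fin m) (Fin m) ℝ} {n : ℝ}
    (hm : m ≠ 0) (hPs : Pᵀ = P) (hPi : P * P = P) (hPt : trace P = n) :
    ⟪frobeniusEmbedding (P - (n / m) • 1), frobeniusEmbedding (P - (n / m) • 1)⟫ =
      n * (m - n) / m := by
  rw [inner_frobeniusEmbedding_sub_smul_one hm hPs hPt hPt, hPi, hPt]
  field_simp

theorem rank_mul_corank_div_pos_of_ne {P Q : Matrix (Fin m) (Fin m) ℝ} {n : ℝ}
    (hPs : Pᵀ = P) (hPi : P * P = P) (hPt : trace P = n)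
    (hQs : Qᵀ = Q) (hQi : Q * Q = Q) (hQt : trace Q = n) (hne : P ≠ Q) :
    0 < n * (m - n) / m := by
  have hm : m ≠ 0 := by rintro rfl; exact hne (Subsingleton.elim _ _)
  have hP := inner_frobeniusEmbedding_sub_smul_one_self hm hPs hPi hPt
  have hQ := inner_frobeniusEmbedding_sub_smul_one_self hm hQs hQi hQt
  refine (hP ▸ real_inner_self_nonneg).lt_of_ne fun h0 => hne ?_
  rw [← h0, inner_self_eq_zero] at hP hQ
  simpa using frobeniusEmbedding_injective (hP.trans hQ.symm)

theorem trace_mul_eq_of_simplex_bound {N : ℕ} {n : ℝ} {P : Fin N → Matrix (Fin m) (Fin m) ℝ}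
    (hm : m ≠ 0) (hsym : ∀ k, (P k)ᵀ = P k) (hidem : ∀ k, P k * P k = P k)
    (htr : ∀ k, trace (P k) = n)
    (hle : ∀ i j, i ≠ j → n * (m - n) / m * (N / (N - 1)) ≤ n - trace (P i * P j))
    {i j : Fin N} (hij : i ≠ j) :
    trace (P i * P j) = n - n * (m - n) / m * (N / (N - 1)) := by
  have hN : (N : ℝ) - 1 ≠ 0 := by
    rw [sub_ne_zero, Nat.cast_ne_one]
    exact (by simpa using Fintype.one_lt_card_iff.mpr ⟨i, j, hij⟩ : 1 < N).ne'
  have hx (k l : Fin N) := inner_frobeniusEmbedding_sub_smul_one hm (hsym k) (htr k) (htr l)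
  -- the bound in the hypothesis is the simplex bound for the traceless parts `P k - (n / m) • 1`
  have hbound :
      n - n * (m - n) / m * (N / (N - 1)) - n ^ 2 / m = -(n * (m - n) / m) / (N - 1) := by
    field_simp; ring
  have key := inner_eq_neg_div_of_inner_le_neg_div
    (fun k => inner_frobeniusEmbedding_sub_smul_one_self hm (hsym k) (hidem k) (htr k))
    (fun k l hkl => by rw [hx, Fintype.card_fin, ← hbound]; linarith [hle k l hkl]) hij
  rw [hx, Fintype.card_fin, ← hbound] at key
  linarith

end Projections

/-- Any packing of `N` `n`-dimensional subspaces of `ℝ^m` achieving equality in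
the simplex bound (all pairwise squared chordal distances at least
`(n(m-n)/m)·N/(N-1)`) must have `N ≤ m(m+1)/2`. -/
theorem simplex_bound_equality_card {m n N : ℕ} (hN : 2 ≤ N)
    (P : Fin N → Matrix (Fin m) (Fin m) ℝ)
    (hsym : ∀ k, (P k)ᵀ = P k) (hidem : ∀ k, P k * P k = P k)
    (htr : ∀ k, Matrix.trace (P k) = (n : ℝ)) (hinj : Function.Injective P)
    (heq : ∀ i j, i ≠ j →
      ((n : ℝ) * ((m : ℝ) - n) / m) * ((N : ℝ) / ((N : ℝ) - 1)) ≤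
        (n : ℝ) - Matrix.trace (P i * P j)) :
    N ≤ m * (m + 1) / 2 := by
  have h01 : (⟨0, by omega⟩ : Fin N) ≠ ⟨1, by omega⟩ := by simp [Fin.ext_iff]
  have hs := rank_mul_corank_div_pos_of_ne (hsym _) (hidem _) (htr _) (hsym _) (hidem _) (htr _)
    (hinj.ne h01)
  have hm : m ≠ 0 := by rintro rfl; simp at hs
  have hn : (n : ℝ) ≠ 0 := by rintro h; simp [h] at hs
  have hN' : (N : ℝ) / (N - 1) ≠ 0 := by
    have : (2 : ℝ) ≤ N := by exact_mod_cast hN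
    exact (div_pos (by linarith) (by linarith)).ne'
  -- the Gram matrix of the `P k` is `(n - γ) J + γ I`, and `⟪1, P k⟫ = n` for every `k`
  have hli : LinearIndependent ℝ (frobeniusEmbedding ∘ P) := by
    refine linearIndependent_of_inner_eq_add_ite (a := n - n * (m - n) / m * (N / (N - 1)))
      (mul_ne_zero hs.ne' hN')
      ((n : ℝ)⁻¹ • frobeniusEmbedding 1) (fun k => ?_) (fun k l => ?_)
    · simp [real_inner_smul_left, inner_frobeniusEmbedding, htr, hn]
    · rw [Function.comp_apply, Function.comp_apply, inner_frobeniusEmbedding, hsym]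
      split_ifs with hkl
      · rw [hkl, hidem, htr]; ring
      · rw [trace_mul_eq_of_simplex_bound hm hsym hidem htr heq hkl]; ring
  have := card_le_card_sym2_of_linearIndependent hsym hli.of_comp
  simpa [Sym2.card, Nat.choose_two_right, mul_comm] using this
end

section
/- The six 2-dimensional subspaces of R^4 obtained from the icosahedron construction are pairwise equidistant in chordal distance, with each pair having principal angles arcsin(1/√5) and π/2, hence d_c² = 6/5 between every pair; moreover this collection achieves equality in the simplex bound (n(m−n)/m)·N/(N−1) = (2·2/4)·(6/5) = 6/5 for N = 6 planes in G(4,2). -/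
open Matrix

noncomputable def icoQ0 (s : ℝ) : Matrix (Fin 4) (Fin 4) ℝ :=
  !![1/2, (-1/2), 0, 0;
     (-1/2), 1/2, 0, 0;
     0, 0, (1/2 - s/5), (-s/10);
     0, 0, (-s/10), (1/2 + s/5)]

noncomputable def icoQ1 (s : ℝ) : Matrix (Fin 4) (Fin 4) ℝ :=
  !![1/2, 1/2, 0, 0;
     1/2, 1/2, 0, 0;
     0, 0, (1/2 - s/5), s/10;
     0, 0, s/10, (1/2 + s/5)]

noncomputable def icoQ2 (s : ℝ) : Matrix (Fin 4) (Fin 4) ℝ :=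
  !![1/2, 0, 0, (-1/2);
     0, (1/2 - s/5), (-s/10), 0;
     0, (-s/10), (1/2 + s/5), 0;
     (-1/2), 0, 0, 1/2]

noncomputable def icoQ3 (s : ℝ) : Matrix (Fin 4) (Fin 4) ℝ :=
  !![1/2, 0, 0, 1/2;
     0, (1/2 - s/5), s/10, 0;
     0, s/10, (1/2 + s/5), 0;
     1/2, 0, 0, 1/2]

noncomputable def icoQ4 (s : ℝ) : Matrix (Fin 4) (Fin 4) ℝ :=
  !![1/2, 0, (-1/2), 0;
     0, (1/2 + s/5), 0, (-s/10);
     (-1/2), 0, 1/2, 0;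
     0, (-s/10), 0, (1/2 - s/5)]

noncomputable def icoQ5 (s : ℝ) : Matrix (Fin 4) (Fin 4) ℝ :=
  !![1/2, 0, 1/2, 0;
     0, (1/2 + s/5), 0, s/10;
     1/2, 0, 1/2, 0;
     0, s/10, 0, (1/2 - s/5)]

lemma icoQ0_symm (s : ℝ) : (icoQ0 s)ᵀ = icoQ0 s := by
  ext i j
  fin_cases i <;> fin_cases j <;> simp [icoQ0, Matrix.vecHead, Matrix.vecTail]

lemma icoQ0_idem (s : ℝ) (hs : s * s = 5) : icoQ0 s * icoQ0 s = icoQ0 s := by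
  ext i j
  fin_cases i <;> fin_cases j <;>
    simp [icoQ0, Matrix.mul_apply, Fin.sum_univ_four, Matrix.vecHead, Matrix.vecTail] <;>
    first
      | ring1
      | linear_combination (1/20 : ℝ) * hs
      | linear_combination (-1/25 : ℝ) * hs
      | linear_combination (3/50 : ℝ) * hs

lemma icoQ0_trace (s : ℝ) : Matrix.trace (icoQ0 s) = 2 := by
  simp [icoQ0, Matrix.trace, Matrix.diag, Matrix.mul_apply, Fin.sum_univ_four, Matrix.vecHead, Matrix.vecTail]
  ring1

lemma icoQ1_symm (s : ℝ) : (icoQ1 s)ᵀ = icoQ1 s := by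
  ext i j
  fin_cases i <;> fin_cases j <;> simp [icoQ1, Matrix.vecHead, Matrix.vecTail]

lemma icoQ1_idem (s : ℝ) (hs : s * s = 5) : icoQ1 s * icoQ1 s = icoQ1 s := by
  ext i j
  fin_cases i <;> fin_cases j <;>
    simp [icoQ1, Matrix.mul_apply, Fin.sum_univ_four, Matrix.vecHead, Matrix.vecTail] <;>
    first
      | ring1
      | linear_combination (1/20 : ℝ) * hs
      | linear_combination (-1/25 : ℝ) * hs
      | linear_combination (3/50 : ℝ) * hs

lemma icoQ1_trace (s : ℝ) : Matrix.trace (icoQ1 s) = 2 := by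
  simp [icoQ1, Matrix.trace, Matrix.diag, Matrix.mul_apply, Fin.sum_univ_four, Matrix.vecHead, Matrix.vecTail]
  ring1

lemma icoQ2_symm (s : ℝ) : (icoQ2 s)ᵀ = icoQ2 s := by
  ext i j
  fin_cases i <;> fin_cases j <;> simp [icoQ2, Matrix.vecHead, Matrix.vecTail]

lemma icoQ2_idem (s : ℝ) (hs : s * s = 5) : icoQ2 s * icoQ2 s = icoQ2 s := by
  ext i j
  fin_cases i <;> fin_cases j <;>
    simp [icoQ2, Matrix.mul_apply, Fin.sum_univ_four, Matrix.vecHead, Matrix.vecTail] <;>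
    first
      | ring1
      | linear_combination (1/20 : ℝ) * hs
      | linear_combination (-1/25 : ℝ) * hs
      | linear_combination (3/50 : ℝ) * hs

lemma icoQ2_trace (s : ℝ) : Matrix.trace (icoQ2 s) = 2 := by
  simp [icoQ2, Matrix.trace, Matrix.diag, Matrix.mul_apply, Fin.sum_univ_four, Matrix.vecHead, Matrix.vecTail]
  ring1

lemma icoQ3_symm (s : ℝ) : (icoQ3 s)ᵀ = icoQ3 s := by
  ext i j
  fin_cases i <;> fin_cases j <;> simp [icoQ3, Matrix.vecHead, Matrix.vecTail]

lemma icoQ3_idem (s : ℝ) (hs : s * s = 5) : icoQ3 s * icoQ3 s = icoQ3 s := by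
  ext i j
  fin_cases i <;> fin_cases j <;>
    simp [icoQ3, Matrix.mul_apply, Fin.sum_univ_four, Matrix.vecHead, Matrix.vecTail] <;>
    first
      | ring1
      | linear_combination (1/20 : ℝ) * hs
      | linear_combination (-1/25 : ℝ) * hs
      | linear_combination (3/50 : ℝ) * hs

lemma icoQ3_trace (s : ℝ) : Matrix.trace (icoQ3 s) = 2 := by
  simp [icoQ3, Matrix.trace, Matrix.diag, Matrix.mul_apply, Fin.sum_univ_four, Matrix.vecHead, Matrix.vecTail]
  ring1

lemma icoQ4_symm (s : ℝ) : (icoQ4 s)ᵀ = icoQ4 s := by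
  ext i j
  fin_cases i <;> fin_cases j <;> simp [icoQ4, Matrix.vecHead, Matrix.vecTail]

lemma icoQ4_idem (s : ℝ) (hs : s * s = 5) : icoQ4 s * icoQ4 s = icoQ4 s := by
  ext i j
  fin_cases i <;> fin_cases j <;>
    simp [icoQ4, Matrix.mul_apply, Fin.sum_univ_four, Matrix.vecHead, Matrix.vecTail] <;>
    first
      | ring1
      | linear_combination (1/20 : ℝ) * hs
      | linear_combination (-1/25 : ℝ) * hs
      | linear_combination (3/50 : ℝ) * hs

lemma icoQ4_trace (s : ℝ) : Matrix.trace (icoQ4 s) = 2 := by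
  simp [icoQ4, Matrix.trace, Matrix.diag, Matrix.mul_apply, Fin.sum_univ_four, Matrix.vecHead, Matrix.vecTail]
  ring1

lemma icoQ5_symm (s : ℝ) : (icoQ5 s)ᵀ = icoQ5 s := by
  ext i j
  fin_cases i <;> fin_cases j <;> simp [icoQ5, Matrix.vecHead, Matrix.vecTail]

lemma icoQ5_idem (s : ℝ) (hs : s * s = 5) : icoQ5 s * icoQ5 s = icoQ5 s := by
  ext i j
  fin_cases i <;> fin_cases j <;>
    simp [icoQ5, Matrix.mul_apply, Fin.sum_univ_four, Matrix.vecHead, Matrix.vecTail] <;>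
    first
      | ring1
      | linear_combination (1/20 : ℝ) * hs
      | linear_combination (-1/25 : ℝ) * hs
      | linear_combination (3/50 : ℝ) * hs

lemma icoQ5_trace (s : ℝ) : Matrix.trace (icoQ5 s) = 2 := by
  simp [icoQ5, Matrix.trace, Matrix.diag, Matrix.mul_apply, Fin.sum_univ_four, Matrix.vecHead, Matrix.vecTail]
  ring1

lemma icoPair01 (s : ℝ) (hs : s * s = 5) :
    Matrix.trace (icoQ0 s * icoQ1 s) = 4/5 := by
  simp [icoQ0, icoQ1, Matrix.trace, Matrix.diag, Matrix.mul_apply, Fin.sum_univ_four, Matrix.vecHead, Matrix.vecTail]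
  linear_combination (3/50 : ℝ) * hs

lemma icoPair02 (s : ℝ) (hs : s * s = 5) :
    Matrix.trace (icoQ0 s * icoQ2 s) = 4/5 := by
  simp [icoQ0, icoQ2, Matrix.trace, Matrix.diag, Matrix.mul_apply, Fin.sum_univ_four, Matrix.vecHead, Matrix.vecTail]
  linear_combination (-1/25 : ℝ) * hs

lemma icoPair03 (s : ℝ) (hs : s * s = 5) :
    Matrix.trace (icoQ0 s * icoQ3 s) = 4/5 := by
  simp [icoQ0, icoQ3, Matrix.trace, Matrix.diag, Matrix.mul_apply, Fin.sum_univ_four, Matrix.vecHead, Matrix.vecTail]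
  linear_combination (-1/25 : ℝ) * hs

lemma icoPair04 (s : ℝ) (hs : s * s = 5) :
    Matrix.trace (icoQ0 s * icoQ4 s) = 4/5 := by
  simp [icoQ0, icoQ4, Matrix.trace, Matrix.diag, Matrix.mul_apply, Fin.sum_univ_four, Matrix.vecHead, Matrix.vecTail]
  linear_combination (-1/25 : ℝ) * hs

lemma icoPair05 (s : ℝ) (hs : s * s = 5) :
    Matrix.trace (icoQ0 s * icoQ5 s) = 4/5 := by
  simp [icoQ0, icoQ5, Matrix.trace, Matrix.diag, Matrix.mul_apply, Fin.sum_univ_four, Matrix.vecHead, Matrix.vecTail]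
  linear_combination (-1/25 : ℝ) * hs

lemma icoPair12 (s : ℝ) (hs : s * s = 5) :
    Matrix.trace (icoQ1 s * icoQ2 s) = 4/5 := by
  simp [icoQ1, icoQ2, Matrix.trace, Matrix.diag, Matrix.mul_apply, Fin.sum_univ_four, Matrix.vecHead, Matrix.vecTail]
  linear_combination (-1/25 : ℝ) * hs

lemma icoPair13 (s : ℝ) (hs : s * s = 5) :
    Matrix.trace (icoQ1 s * icoQ3 s) = 4/5 := by
  simp [icoQ1, icoQ3, Matrix.trace, Matrix.diag, Matrix.mul_apply, Fin.sum_univ_four, Matrix.vecHead, Matrix.vecTail]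
  linear_combination (-1/25 : ℝ) * hs

lemma icoPair14 (s : ℝ) (hs : s * s = 5) :
    Matrix.trace (icoQ1 s * icoQ4 s) = 4/5 := by
  simp [icoQ1, icoQ4, Matrix.trace, Matrix.diag, Matrix.mul_apply, Fin.sum_univ_four, Matrix.vecHead, Matrix.vecTail]
  linear_combination (-1/25 : ℝ) * hs

lemma icoPair15 (s : ℝ) (hs : s * s = 5) :
    Matrix.trace (icoQ1 s * icoQ5 s) = 4/5 := by
  simp [icoQ1, icoQ5, Matrix.trace, Matrix.diag, Matrix.mul_apply, Fin.sum_univ_four, Matrix.vecHead, Matrix.vecTail]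
  linear_combination (-1/25 : ℝ) * hs

lemma icoPair23 (s : ℝ) (hs : s * s = 5) :
    Matrix.trace (icoQ2 s * icoQ3 s) = 4/5 := by
  simp [icoQ2, icoQ3, Matrix.trace, Matrix.diag, Matrix.mul_apply, Fin.sum_univ_four, Matrix.vecHead, Matrix.vecTail]
  linear_combination (3/50 : ℝ) * hs

lemma icoPair24 (s : ℝ) (hs : s * s = 5) :
    Matrix.trace (icoQ2 s * icoQ4 s) = 4/5 := by
  simp [icoQ2, icoQ4, Matrix.trace, Matrix.diag, Matrix.mul_apply, Fin.sum_univ_four, Matrix.vecHead, Matrix.vecTail]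
  linear_combination (-1/25 : ℝ) * hs

lemma icoPair25 (s : ℝ) (hs : s * s = 5) :
    Matrix.trace (icoQ2 s * icoQ5 s) = 4/5 := by
  simp [icoQ2, icoQ5, Matrix.trace, Matrix.diag, Matrix.mul_apply, Fin.sum_univ_four, Matrix.vecHead, Matrix.vecTail]
  linear_combination (-1/25 : ℝ) * hs

lemma icoPair34 (s : ℝ) (hs : s * s = 5) :
    Matrix.trace (icoQ3 s * icoQ4 s) = 4/5 := by
  simp [icoQ3, icoQ4, Matrix.trace, Matrix.diag, Matrix.mul_apply, Fin.sum_univ_four, Matrix.vecHead, Matrix.vecTail]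
  linear_combination (-1/25 : ℝ) * hs

lemma icoPair35 (s : ℝ) (hs : s * s = 5) :
    Matrix.trace (icoQ3 s * icoQ5 s) = 4/5 := by
  simp [icoQ3, icoQ5, Matrix.trace, Matrix.diag, Matrix.mul_apply, Fin.sum_univ_four, Matrix.vecHead, Matrix.vecTail]
  linear_combination (-1/25 : ℝ) * hs

lemma icoPair45 (s : ℝ) (hs : s * s = 5) :
    Matrix.trace (icoQ4 s * icoQ5 s) = 4/5 := by
  simp [icoQ4, icoQ5, Matrix.trace, Matrix.diag, Matrix.mul_apply, Fin.sum_univ_four, Matrix.vecHead, Matrix.vecTail]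
  linear_combination (3/50 : ℝ) * hs

/-- The six icosahedral planes, bundled as a `Fin 6`-indexed family. -/
noncomputable def icoP (s : ℝ) : Fin 6 → Matrix (Fin 4) (Fin 4) ℝ :=
  ![icoQ0 s, icoQ1 s, icoQ2 s, icoQ3 s, icoQ4 s, icoQ5 s]

lemma icoP_symm (s : ℝ) (k : Fin 6) : (icoP s k)ᵀ = icoP s k := by
  fin_cases k
  · exact icoQ0_symm s
  · exact icoQ1_symm s
  · exact icoQ2_symm s
  · exact icoQ3_symm s
  · exact icoQ4_symm s
  · exact icoQ5_symm s

lemma icoP_idem (s : ℝ) (hs : s * s = 5) (k : Fin 6) :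
    icoP s k * icoP s k = icoP s k := by
  fin_cases k
  · exact icoQ0_idem s hs
  · exact icoQ1_idem s hs
  · exact icoQ2_idem s hs
  · exact icoQ3_idem s hs
  · exact icoQ4_idem s hs
  · exact icoQ5_idem s hs

lemma icoP_trace (s : ℝ) (k : Fin 6) : Matrix.trace (icoP s k) = 2 := by
  fin_cases k
  · exact icoQ0_trace s
  · exact icoQ1_trace s
  · exact icoQ2_trace s
  · exact icoQ3_trace s
  · exact icoQ4_trace s
  · exact icoQ5_trace s

lemma icoP_pair (s : ℝ) (hs : s * s = 5) (i j : Fin 6) (hij : i ≠ j) :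
    Matrix.trace (icoP s i * icoP s j) = 4/5 := by
  fin_cases i <;> fin_cases j
  · exact absurd rfl hij
  · exact icoPair01 _ hs
  · exact icoPair02 _ hs
  · exact icoPair03 _ hs
  · exact icoPair04 _ hs
  · exact icoPair05 _ hs
  · exact (Matrix.trace_mul_comm _ _).trans (icoPair01 _ hs)
  · exact absurd rfl hij
  · exact icoPair12 _ hs
  · exact icoPair13 _ hs
  · exact icoPair14 _ hs
  · exact icoPair15 _ hs
  · exact (Matrix.trace_mul_comm _ _).trans (icoPair02 _ hs)
  · exact (Matrix.trace_mul_comm _ _).trans (icoPair12 _ hs)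
  · exact absurd rfl hij
  · exact icoPair23 _ hs
  · exact icoPair24 _ hs
  · exact icoPair25 _ hs
  · exact (Matrix.trace_mul_comm _ _).trans (icoPair03 _ hs)
  · exact (Matrix.trace_mul_comm _ _).trans (icoPair13 _ hs)
  · exact (Matrix.trace_mul_comm _ _).trans (icoPair23 _ hs)
  · exact absurd rfl hij
  · exact icoPair34 _ hs
  · exact icoPair35 _ hs
  · exact (Matrix.trace_mul_comm _ _).trans (icoPair04 _ hs)
  · exact (Matrix.trace_mul_comm _ _).trans (icoPair14 _ hs)
  · exact (Matrix.trace_mul_comm _ _).trans (icoPair24 _ hs)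
  · exact (Matrix.trace_mul_comm _ _).trans (icoPair34 _ hs)
  · exact absurd rfl hij
  · exact icoPair45 _ hs
  · exact (Matrix.trace_mul_comm _ _).trans (icoPair05 _ hs)
  · exact (Matrix.trace_mul_comm _ _).trans (icoPair15 _ hs)
  · exact (Matrix.trace_mul_comm _ _).trans (icoPair25 _ hs)
  · exact (Matrix.trace_mul_comm _ _).trans (icoPair35 _ hs)
  · exact (Matrix.trace_mul_comm _ _).trans (icoPair45 _ hs)
  · exact absurd rfl hij

/-- There exist six planes (2-dimensional subspaces, given by their projection
matrices) in `ℝ^4` that are pairwise equidistant in chordal distance, each pair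
having principal angles `arcsin (1/√5)` and `π/2` (so `trace (PᵢPⱼ) =
cos²(arcsin (1/√5)) + cos²(π/2)` and `d_c² = 6/5`), achieving equality in the
simplex bound `(n(m-n)/m)·N/(N-1) = (2·2/4)·(6/5) = 6/5`. -/
theorem six_planes_G42 :
    ∃ P : Fin 6 → Matrix (Fin 4) (Fin 4) ℝ,
      Function.Injective P ∧
      (∀ k, (P k)ᵀ = P k ∧ P k * P k = P k ∧ Matrix.trace (P k) = 2) ∧
      (∀ i j, i ≠ j →
        Matrix.trace (P i * P j) =
          Real.cos (Real.arcsin (1 / Real.sqrt 5)) ^ 2 +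
            Real.cos (Real.pi / 2) ^ 2 ∧
        (2 : ℝ) - Matrix.trace (P i * P j) = 6 / 5) ∧
      (6 / 5 : ℝ) = ((2 : ℝ) * ((4 : ℝ) - 2) / 4) * ((6 : ℝ) / ((6 : ℝ) - 1)) := by
  have hs : Real.sqrt 5 * Real.sqrt 5 = 5 := Real.mul_self_sqrt (by norm_num)
  have hsq : (1 / Real.sqrt 5) ^ 2 = 1/5 := by
    rw [div_pow, one_pow, sq, hs]
  have hcos : Real.cos (Real.arcsin (1 / Real.sqrt 5)) ^ 2 +
      Real.cos (Real.pi / 2) ^ 2 = 4/5 := by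
    rw [Real.cos_arcsin, Real.cos_pi_div_two,
      Real.sq_sqrt (by rw [hsq]; norm_num), hsq]
    norm_num
  refine ⟨icoP (Real.sqrt 5), ?_,
    fun k => ⟨icoP_symm _ k, icoP_idem _ hs k, icoP_trace _ k⟩,
    fun i j hij => ⟨by rw [icoP_pair _ hs i j hij, hcos],
      by rw [icoP_pair _ hs i j hij]; norm_num⟩,
    by norm_num⟩
  intro i j h
  by_contra hne
  have h1 := icoP_pair _ hs i j hne
  rw [h, icoP_idem _ hs j, icoP_trace _ j] at h1
  norm_num at h1
end
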